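/- arXiv:1804.08510 — 6 statements merged into one kernel-verified Lean document; each statement's English description precedes it below -/
import Mathlib

section
/- Let A ∈ L(X) be an invertible bounded operator on a Hilbert space X and B ∈ L(U, X). If the pair (A, B) is uniformly controllable, then the pair (A⁻¹, A⁻¹ B) is controllable, i.e. the closed span of ∪_{k≥0} range((A⁻¹)^k A⁻¹ B) equals X. -/
/- STATEMENT 3: If `A` is an invertible bounded operator on a Hilbert space and the
pair `(A, B)` is uniformly controllable, then `(A⁻¹, A⁻¹B)` is controllable: the
closed span of `∪_{k≥0} range((A⁻¹)^k A⁻¹ B)` is all of `X`. -/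

noncomputable section
open ContinuousLinearMap

theorem controllable_inverse_of_uniformly_controllable
    {X U : Type*}
    [NormedAddCommGroup X] [InnerProductSpace ℂ X] [CompleteSpace X]
    [NormedAddCommGroup U] [InnerProductSpace ℂ U] [CompleteSpace U]
    (A AInv : X →L[ℂ] X) (hAInv₁ : A ∘L AInv = 1) (hAInv₂ : AInv ∘L A = 1)
    (B : U →L[ℂ] X)
    -- uniform controllability
    (huc : ∀ (x : X) (ε : ℝ), 0 < ε → ∃ (N : ℕ) (u : Fin (N + 1) → U),
      ‖(∑ k : Fin (N + 1), (A ^ (k : ℕ)) (B (u k))) - (A ^ (N + 1)) x‖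
        < ε / ‖AInv ^ (N + 1)‖) :
    (⨆ k : ℕ, LinearMap.range ((((AInv ^ k) ∘L (AInv ∘L B)) : U →L[ℂ] X) : U →ₗ[ℂ] X)).topologicalClosure
      = ⊤ := by
  set S := ⨆ k : ℕ, LinearMap.range ((((AInv ^ k) ∘L (AInv ∘L B)) : U →L[ℂ] X) : U →ₗ[ℂ] X) with hSdef
  -- key: AInv^n (A^n y) = y
  have key : ∀ n (y : X), (AInv ^ n) ((A ^ n) y) = y := by
    intro n
    induction n with
    | zero => intro y; simp
    | succ n ih =>
      intro y
      have h1 : (A ^ (n + 1)) y = A ((A ^ n) y) := by rw [pow_succ']; rfl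
      have h2 : (AInv ^ (n + 1)) (A ((A ^ n) y)) = (AInv ^ n) (AInv (A ((A ^ n) y))) := by
        rw [pow_succ]; rfl
      have h3 : AInv (A ((A ^ n) y)) = (A ^ n) y := by
        have := congrArg (fun f : X →L[ℂ] X => f ((A ^ n) y)) hAInv₂
        simpa using this
      rw [h1, h2, h3, ih]
  rw [eq_top_iff]
  intro x _
  rw [← SetLike.mem_coe, Submodule.topologicalClosure_coe]
  rw [Metric.mem_closure_iff]
  intro ε hε
  obtain ⟨N, u, h⟩ := huc x ε hε
  by_cases hT : (AInv ^ (N + 1) : X →L[ℂ] X) = 0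
  · -- degenerate case: X is trivial
    have hx0 : x = 0 := by
      have := key (N + 1) x
      rw [hT] at this
      simpa using this.symm
    exact ⟨0, Submodule.zero_mem S, by simpa [hx0] using hε⟩
  · have hTpos : 0 < ‖(AInv ^ (N + 1) : X →L[ℂ] X)‖ := norm_pos_iff.mpr hT
    refine ⟨(AInv ^ (N + 1)) (∑ k : Fin (N + 1), (A ^ (k : ℕ)) (B (u k))), ?_, ?_⟩
    · -- membership
      rw [map_sum]
      apply Submodule.sum_mem
      intro k _
      have hk : (k : ℕ) ≤ N := Nat.lt_succ_iff.mp k.isLt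
      have heq : (AInv ^ (N + 1)) ((A ^ (k : ℕ)) (B (u k)))
          = ((AInv ^ (N - (k : ℕ))) ∘L (AInv ∘L B)) (u k) := by
        have hp : (AInv ^ (N + 1)) = (AInv ^ ((N - (k : ℕ)) + 1)) * (AInv ^ (k : ℕ)) := by
          rw [← pow_add]; congr 1; omega
        rw [hp]
        have : ((AInv ^ ((N - (k : ℕ)) + 1)) * (AInv ^ (k : ℕ))) ((A ^ (k : ℕ)) (B (u k)))
            = (AInv ^ ((N - (k : ℕ)) + 1)) ((AInv ^ (k : ℕ)) ((A ^ (k : ℕ)) (B (u k)))) := rfl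
        rw [this, key (k : ℕ) (B (u k)), pow_succ]
        rfl
      rw [heq]
      exact Submodule.mem_iSup_of_mem (N - (k : ℕ)) (LinearMap.mem_range_self _ _)
    · -- distance estimate
      have hx : x = (AInv ^ (N + 1)) ((A ^ (N + 1)) x) := (key (N + 1) x).symm
      rw [dist_eq_norm]
      calc ‖x - (AInv ^ (N + 1)) (∑ k : Fin (N + 1), (A ^ (k : ℕ)) (B (u k)))‖
          = ‖(AInv ^ (N + 1)) ((A ^ (N + 1)) x - ∑ k : Fin (N + 1), (A ^ (k : ℕ)) (B (u k)))‖ := by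
            rw [map_sub, ← hx]
        _ ≤ ‖(AInv ^ (N + 1) : X →L[ℂ] X)‖ *
              ‖(A ^ (N + 1)) x - ∑ k : Fin (N + 1), (A ^ (k : ℕ)) (B (u k))‖ :=
            le_opNorm _ _
        _ < ‖(AInv ^ (N + 1) : X →L[ℂ] X)‖ * (ε / ‖(AInv ^ (N + 1) : X →L[ℂ] X)‖) := by
            apply mul_lt_mul_of_pos_left _ hTpos
            rwa [norm_sub_rev] at h
        _ = ε := by field_simp
end
end

section
/- If S : X → ℝ is a storage function for the dichotomous system Σ — i.e. S is continuous at 0, S(0) = 0, and S(x(n+1)) − S(x(n)) ≤ ‖u(n)‖² − ‖y(n)‖² for all n along every ℓ²-admissible system trajectory (u, x, y) — then the input-output map T_Σ : ℓ²(ℤ,U) → ℓ²(ℤ,Y) is a contraction: ‖T_Σ‖ ≤ 1. -/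
/- STATEMENT 5: If the dichotomous system `Σ` has a storage function `S` (continuous
at 0, `S 0 = 0`, dissipation inequality along every ℓ²-admissible trajectory), then
the input-output map `T_Σ : ℓ²(ℤ,U) → ℓ²(ℤ,Y)` is a contraction: `‖T_Σ‖ ≤ 1`. -/

noncomputable section
open scoped ENNReal


private lemma memℓp_two_summable_sq {W : Type*} [NormedAddCommGroup W]
    {f : ℤ → W} (hf : Memℓp f 2) : Summable (fun n => ‖f n‖ ^ 2) := by
  have h2 : (0:ℝ) < (2 : ℝ≥0∞).toReal := by norm_num
  have := (memℓp_gen_iff h2).1 hf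
  rw [show ((2 : ℝ≥0∞)).toReal = (2:ℝ) from by norm_num] at this
  have he : ∀ n : ℤ, ‖f n‖ ^ (2:ℝ) = ‖f n‖ ^ 2 := fun n => Real.rpow_two _
  simpa [he] using this

private lemma lp_norm_sq_eq_tsum {W : Type*} [NormedAddCommGroup W]
    (f : lp (fun _ : ℤ => W) 2) : ‖f‖ ^ 2 = ∑' k, ‖f k‖ ^ 2 := by
  have h2 : (0:ℝ) < (2 : ℝ≥0∞).toReal := by norm_num
  have := lp.norm_rpow_eq_tsum h2 f
  rw [show ((2 : ℝ≥0∞)).toReal = (2:ℝ) from by norm_num] at this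
  have he : ∀ n : ℤ, ‖f n‖ ^ (2:ℝ) = ‖f n‖ ^ 2 := fun n => Real.rpow_two _
  simpa [he, Real.rpow_two] using this

theorem storage_function_implies_contractive_io_map
    {U X Y : Type*}
    [NormedAddCommGroup U] [InnerProductSpace ℂ U] [CompleteSpace U]
    [NormedAddCommGroup X] [InnerProductSpace ℂ X] [CompleteSpace X]
    [NormedAddCommGroup Y] [InnerProductSpace ℂ Y] [CompleteSpace Y]
    (A : X →L[ℂ] X) (B : U →L[ℂ] X) (C : X →L[ℂ] Y) (D : U →L[ℂ] Y)
    -- the input-output map: for each ℓ² input there is a unique ℓ² state trajectory,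
    -- and `T u` is the corresponding output
    (T : lp (fun _ : ℤ => U) 2 →L[ℂ] lp (fun _ : ℤ => Y) 2)
    (hT : ∀ u : lp (fun _ : ℤ => U) 2,
      ∃! x : ℤ → X, Memℓp x 2 ∧ (∀ n : ℤ, x (n + 1) = A (x n) + B (u n)) ∧
        (∀ n : ℤ, (T u) n = C (x n) + D (u n)))
    -- `S` is a storage function for `Σ`
    (S : X → ℝ)
    (hS0 : S 0 = 0)
    (hScont : ContinuousAt S 0)
    (hSdiss : ∀ (u : ℤ → U) (x : ℤ → X) (y : ℤ → Y),
      Memℓp u 2 → Memℓp x 2 → Memℓp y 2 →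
      (∀ n : ℤ, x (n + 1) = A (x n) + B (u n) ∧ y n = C (x n) + D (u n)) →
      ∀ n : ℤ, S (x (n + 1)) - S (x n) ≤ ‖u n‖ ^ 2 - ‖y n‖ ^ 2) :
    ‖T‖ ≤ 1 := by
  have h2 : (0:ℝ) < (2 : ℝ≥0∞).toReal := by norm_num
  refine T.opNorm_le_bound zero_le_one (fun u => ?_)
  rw [one_mul]
  obtain ⟨x, ⟨hx2, hrec, hout⟩, -⟩ := hT u
  have hu2 : Memℓp (fun n => u n) 2 := lp.memℓp u
  have hy2 : Memℓp (fun n => T u n) 2 := lp.memℓp (T u)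
  have hdiss := hSdiss (fun n => u n) x (fun n => T u n) hu2 hx2 hy2
    (fun n => ⟨hrec n, hout n⟩)
  have hus : Summable (fun n => ‖u n‖ ^ 2) := memℓp_two_summable_sq hu2
  have hys : Summable (fun n => ‖T u n‖ ^ 2) := memℓp_two_summable_sq hy2
  have hxs : Summable (fun n => ‖x n‖ ^ 2) := memℓp_two_summable_sq hx2
  -- x → 0 along cofinite, hence S ∘ x → 0
  have hx0 : Filter.Tendsto x Filter.cofinite (nhds 0) := by
    rw [tendsto_zero_iff_norm_tendsto_zero]
    have h1 : Filter.Tendsto (fun n => ‖x n‖ ^ 2) Filter.cofinite (nhds 0) :=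
      hxs.tendsto_cofinite_zero
    have h2 : Filter.Tendsto (fun n => Real.sqrt (‖x n‖ ^ 2)) Filter.cofinite
        (nhds (Real.sqrt 0)) := h1.sqrt
    rw [Real.sqrt_zero] at h2
    have heq : (fun n => Real.sqrt (‖x n‖ ^ 2)) = fun n => ‖x n‖ :=
      funext fun n => Real.sqrt_sq (norm_nonneg _)
    rwa [heq] at h2
  have hSx0 : Filter.Tendsto (fun n => S (x n)) Filter.cofinite (nhds 0) := by
    have := hScont.tendsto.comp hx0
    simpa [hS0, Function.comp_def] using this
  -- main inequality on tsums
  have main : (∑' n, ‖T u n‖ ^ 2) ≤ ∑' n, ‖u n‖ ^ 2 := by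
    refine le_of_forall_pos_le_add (fun ε hε => ?_)
    refine Summable.tsum_le_of_sum_le hys (fun F => ?_)
    have hev : ∀ᶠ n in Filter.cofinite, |S (x n)| < ε / 2 := by
      have := hSx0.eventually (eventually_abs_sub_lt 0 (by linarith : (0:ℝ) < ε/2))
      simpa using this
    obtain ⟨E, hE⟩ : ∃ E : Finset ℤ, ∀ n ∉ E, |S (x n)| < ε / 2 := by
      rw [Filter.eventually_cofinite] at hev
      exact ⟨hev.toFinset, fun n hn => by_contra fun h => hn (hev.mem_toFinset.2 h)⟩
    set G : Finset ℤ := insert 0 (F ∪ E) with hG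
    have hGne : G.Nonempty := ⟨0, Finset.mem_insert_self _ _⟩
    set m : ℤ := G.min' hGne - 1 with hm
    set n : ℤ := G.max' hGne + 1 with hn
    have hmE : m ∉ E := fun h => by
      have := G.min'_le m (by simp [hG, h]); omega
    have hnE : n ∉ E := fun h => by
      have := G.le_max' n (by simp [hG, h]); omega
    have hmn : m ≤ n := by
      have := G.min'_le _ (G.max'_mem hGne); omega
    have hFsub : F ⊆ Finset.Ico m n := by
      intro k hk
      have h1 := G.min'_le k (by simp [hG, hk])
      have h2 := G.le_max' k (by simp [hG, hk])
      simp only [Finset.mem_Ico]; omega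
    -- telescoping
    have hdiss' : ∀ k : ℤ, S (x (k + 1)) - S (x k) ≤ ‖u k‖ ^ 2 - ‖T u k‖ ^ 2 :=
      fun k => hdiss k
    have tele : ∀ d : ℕ, S (x (m + d)) - S (x m) ≤
        ∑ k ∈ Finset.Ico m (m + d), (‖u k‖ ^ 2 - ‖T u k‖ ^ 2) := by
      intro d
      induction d with
      | zero => simp
      | succ d ih =>
        have hins : Finset.Ico m (m + ((d+1:ℕ):ℤ)) = insert (m + d) (Finset.Ico m (m + d)) := by
          ext k; simp only [Finset.mem_Ico, Finset.mem_insert]; push_cast; omega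
        rw [hins, Finset.sum_insert (by simp)]
        have h := hdiss' (m + d)
        have hx1 : (m + (d:ℤ)) + 1 = m + ((d+1:ℕ):ℤ) := by push_cast; ring
        rw [hx1] at h
        linarith
    have t1 : S (x n) - S (x m) ≤
        ∑ k ∈ Finset.Ico m n, (‖u k‖ ^ 2 - ‖T u k‖ ^ 2) := by
      have h := tele (n - m).toNat
      rw [show m + (((n - m).toNat : ℕ) : ℤ) = n from by omega] at h
      exact h
    rw [Finset.sum_sub_distrib] at t1
    have hsumU : ∑ k ∈ Finset.Ico m n, ‖u k‖ ^ 2 ≤ ∑' k, ‖u k‖ ^ 2 :=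
      Summable.sum_le_tsum _ (fun k _ => by positivity) hus
    have hSm : S (x m) < ε / 2 := (abs_lt.1 (hE m hmE)).2
    have hSn : -(ε/2) < S (x n) := (abs_lt.1 (hE n hnE)).1
    calc ∑ k ∈ F, ‖T u k‖ ^ 2
        ≤ ∑ k ∈ Finset.Ico m n, ‖T u k‖ ^ 2 :=
          Finset.sum_le_sum_of_subset_of_nonneg hFsub (fun k _ _ => by positivity)
      _ ≤ ∑' k, ‖u k‖ ^ 2 + ε := by linarith
  -- conclude norm inequality
  have : ‖T u‖ ^ 2 ≤ ‖u‖ ^ 2 := by rw [lp_norm_sq_eq_tsum (T u), lp_norm_sq_eq_tsum u]; exact main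
  calc ‖T u‖ = Real.sqrt (‖T u‖ ^ 2) := (Real.sqrt_sq (norm_nonneg _)).symm
    _ ≤ Real.sqrt (‖u‖ ^ 2) := Real.sqrt_le_sqrt this
    _ = ‖u‖ := Real.sqrt_sq (norm_nonneg _)
end
end

section
/- Existence of the operator X_{o,+} via the Douglas lemma: suppose T and H are bounded operators with ‖T‖ ≤ 1 and H H* ⪯ I − T T* (so D_{T*}² ⪰ H H* where D_{T*} = (I − T T*)^{1/2}), and suppose H factors as H = W_o W_c with W_c surjective and W_o injective. Then there exists a unique bounded operator X with W_o = D_{T*} X and range(X) ⊆ closure(range D_{T*}); moreover X is injective. -/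
/- STATEMENT 10: Existence of `X_{o,+}` via the Douglas lemma: if `‖T‖ ≤ 1`,
`H H* ⪯ I − T T*` (so `D_{T*}² ⪰ H H*`, where `D_{T*} = (I − TT*)^{1/2}`), and
`H = W_o W_c` with `W_c` surjective and `W_o` injective, then there is a unique
bounded operator `X` with `W_o = D_{T*} X` and
`range X ⊆ closure (range D_{T*})`; moreover this `X` is injective. -/

noncomputable section
open ContinuousLinearMap

set_option maxHeartbeats 1000000

theorem douglas_factorization_Xo
    {K₁ K₂ X₀ : Type*}
    [NormedAddCommGroup K₁] [InnerProductSpace ℂ K₁] [CompleteSpace K₁]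
    [NormedAddCommGroup K₂] [InnerProductSpace ℂ K₂] [CompleteSpace K₂]
    [NormedAddCommGroup X₀] [InnerProductSpace ℂ X₀] [CompleteSpace X₀]
    (T : K₁ →L[ℂ] K₂) (hT : ‖T‖ ≤ 1)
    (H : K₁ →L[ℂ] K₂)
    -- `D_{T*}`: the positive square root of `I - T T*`
    (Dst : K₂ →L[ℂ] K₂) (hDsa : IsSelfAdjoint Dst)
    (hDpos : ∀ v : K₂, 0 ≤ (inner ℂ (Dst v) v : ℂ).re)
    (hDsq : Dst ∘L Dst = 1 - T ∘L (adjoint T))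
    -- `H H* ⪯ I - T T*`
    (hHT : ∀ v : K₂,
      (inner ℂ ((H ∘L (adjoint H)) v) v : ℂ).re
        ≤ (inner ℂ (((1 : K₂ →L[ℂ] K₂) - T ∘L (adjoint T)) v) v : ℂ).re)
    -- factorization `H = W_o ∘ W_c` with `W_c` surjective, `W_o` injective
    (Wc : K₁ →L[ℂ] X₀) (hWc : Function.Surjective Wc)
    (Wo : X₀ →L[ℂ] K₂) (hWo : Function.Injective Wo)
    (hfact : H = Wo ∘L Wc) :
    (∃! Xop : X₀ →L[ℂ] K₂,
        Wo = Dst ∘L Xop ∧ Set.range Xop ⊆ closure (Set.range Dst)) ∧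
    (∀ Xop : X₀ →L[ℂ] K₂,
        Wo = Dst ∘L Xop → Set.range Xop ⊆ closure (Set.range Dst) →
        Function.Injective Xop) := by
  classical
  have hDadj : adjoint Dst = Dst := by rw [← star_eq_adjoint]; exact hDsa
  -- `Wc*` is bounded below
  obtain ⟨c, hc0, hc⟩ := Wc.exists_preimage_norm_le hWc
  have hWcStar : ∀ u : X₀, ‖u‖ ≤ c * ‖adjoint Wc u‖ := by
    intro u
    obtain ⟨k, hk, hkn⟩ := hc u
    have h2 : (inner ℂ u u : ℂ) = inner ℂ k (adjoint Wc u) := by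
      rw [adjoint_inner_right, hk]
    have h3 : ‖u‖ ^ 2 ≤ ‖k‖ * ‖adjoint Wc u‖ := by
      rw [← inner_self_eq_norm_sq (𝕜 := ℂ) u, h2]
      calc (inner ℂ k (adjoint Wc u) : ℂ).re ≤ ‖(inner ℂ k (adjoint Wc u) : ℂ)‖ :=
            Complex.re_le_norm _
        _ ≤ ‖k‖ * ‖adjoint Wc u‖ := norm_inner_le_norm _ _
    rcases eq_or_lt_of_le (norm_nonneg u) with h0 | h0
    · rw [← h0]; exact mul_nonneg hc0.le (norm_nonneg _)
    · nlinarith [norm_nonneg (adjoint Wc u),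
        mul_le_mul_of_nonneg_right hkn (norm_nonneg (adjoint Wc u))]
  -- `‖H* v‖ ≤ ‖Dst v‖`
  have hHle : ∀ v : K₂, ‖adjoint H v‖ ≤ ‖Dst v‖ := by
    intro v
    have e1 : (inner ℂ ((H ∘L adjoint H) v) v : ℂ).re = ‖adjoint H v‖ ^ 2 := by
      rw [comp_apply, ← adjoint_inner_right, inner_self_eq_norm_sq_to_K,
        ]
      norm_cast
    have e2 : (inner ℂ (((1 : K₂ →L[ℂ] K₂) - T ∘L adjoint T) v) v : ℂ).re
        = ‖Dst v‖ ^ 2 := by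
      rw [← hDsq, comp_apply, ← adjoint_inner_right, hDadj, inner_self_eq_norm_sq_to_K,
        ]
      norm_cast
    have h := hHT v
    rw [e1, e2] at h
    nlinarith [norm_nonneg (adjoint H v), norm_nonneg (Dst v)]
  -- `‖Wo* v‖ ≤ c * ‖Dst v‖`
  have hbound : ∀ v : K₂, ‖adjoint Wo v‖ ≤ c * ‖Dst v‖ := by
    intro v
    have h1 := hWcStar (adjoint Wo v)
    have h2 : adjoint Wc (adjoint Wo v) = adjoint H v := by
      rw [hfact, adjoint_comp, comp_apply]
    rw [h2] at h1
    exact h1.trans (mul_le_mul_of_nonneg_left (hHle v) hc0.le)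
  -- well-definedness of the Douglas factor on the range of `Dst`
  have keyWD : ∀ v v' : K₂, Dst v = Dst v' → adjoint Wo v = adjoint Wo v' := by
    intro v v' h
    have h2 : ‖adjoint Wo v - adjoint Wo v'‖ ≤ 0 := by
      have := hbound (v - v')
      simpa [map_sub, h] using this
    rw [← sub_eq_zero]
    exact norm_le_zero_iff.mp h2
  set p : Submodule ℂ K₂ := LinearMap.range (Dst : K₂ →ₗ[ℂ] K₂) with hp
  have hex : ∀ w : p, ∃ v : K₂, Dst v = (w : K₂) := fun w => LinearMap.mem_range.mp w.2
  choose pick hpick using hex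
  -- the Douglas factor on `p = range Dst`
  set Slin : p →ₗ[ℂ] X₀ :=
    { toFun := fun w => adjoint Wo (pick w)
      map_add' := by
        intro a b
        have h : Dst (pick (a + b)) = Dst (pick a + pick b) := by
          rw [hpick, map_add, hpick, hpick, Submodule.coe_add]
        show adjoint Wo (pick (a + b))
            = adjoint Wo (pick a) + adjoint Wo (pick b)
        rw [keyWD _ _ h, map_add]
      map_smul' := by
        intro m a
        have h : Dst (pick (m • a)) = Dst (m • pick a) := by
          rw [hpick, map_smul, hpick, Submodule.coe_smul]
        show adjoint Wo (pick (m • a)) = m • adjoint Wo (pick a)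
        rw [keyWD _ _ h, map_smul] } with hSlin
  set S : p →L[ℂ] X₀ := Slin.mkContinuous c (by
    intro w
    have := hbound (pick w)
    rwa [hpick w] at this) with hS
  set M : Submodule ℂ K₂ := p.topologicalClosure with hM
  haveI : CompleteSpace M := (Submodule.isClosed_topologicalClosure p).completeSpace_coe
  set e : p →L[ℂ] M :=
    p.subtypeL.codRestrict M (fun w => p.le_topologicalClosure w.2) with he
  have hui : IsUniformInducing e :=
    (AddMonoidHomClass.isometry_of_norm e (fun _ => rfl)).isUniformInducing
  have hdr : DenseRange e := by
    intro m
    have hm : (m : K₂) ∈ closure (p : Set K₂) := by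
      rw [← Submodule.topologicalClosure_coe]; exact m.2
    rcases mem_closure_iff_seq_limit.mp hm with ⟨u, hu, hlim⟩
    refine mem_closure_iff_seq_limit.mpr ⟨fun n => e ⟨u n, hu n⟩, fun n => ⟨_, rfl⟩, ?_⟩
    rw [tendsto_subtype_rng]
    exact hlim
  set g : M →L[ℂ] X₀ := S.extend e with hg
  set Xstar : K₂ →L[ℂ] X₀ := g ∘L (M.orthogonalProjectionOnto : K₂ →L[ℂ] M) with hXstar
  set X : X₀ →L[ℂ] K₂ := adjoint Xstar with hX
  have hmemM : ∀ v : K₂, Dst v ∈ M :=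
    fun v => p.le_topologicalClosure (LinearMap.mem_range.mpr ⟨v, rfl⟩)
  have hXsD : ∀ v : K₂, Xstar (Dst v) = adjoint Wo v := by
    intro v
    have hmemp : Dst v ∈ p := LinearMap.mem_range.mpr ⟨v, rfl⟩
    have h1 : M.orthogonalProjectionOnto (Dst v) = (⟨Dst v, hmemM v⟩ : M) :=
      Submodule.orthogonalProjectionOnto_mem_subspace_eq_self (⟨Dst v, hmemM v⟩ : M)
    have h2 : (⟨Dst v, hmemM v⟩ : M) = e ⟨Dst v, hmemp⟩ := rfl
    have h3 : Xstar (Dst v) = g (e ⟨Dst v, hmemp⟩) := by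
      rw [hXstar, comp_apply, h1, h2]
    rw [h3, hg, ContinuousLinearMap.extend_eq _ hdr hui]
    exact keyWD _ _ (hpick ⟨Dst v, hmemp⟩)
  have hWoX : Wo = Dst ∘L X := by
    have h1 : Xstar ∘L Dst = adjoint Wo := ContinuousLinearMap.ext fun v => hXsD v
    have h2 := congrArg adjoint h1
    rw [adjoint_comp, hDadj, adjoint_adjoint] at h2
    exact h2.symm
  have hMc : (M : Set K₂) = closure (Set.range Dst) := by
    rw [hM, Submodule.topologicalClosure_coe]
    congr 1
  have hRange : Set.range X ⊆ closure (Set.range Dst) := by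
    rintro _ ⟨x, rfl⟩
    rw [← hMc]
    change X x ∈ M
    rw [← M.orthogonal_orthogonal]
    rw [Submodule.mem_orthogonal]
    intro u hu
    have hP : M.orthogonalProjectionOnto u = 0 :=
      Submodule.orthogonalProjectionOnto_apply_of_mem_orthogonal hu
    have h1 : (inner ℂ u (X x) : ℂ) = inner ℂ (Xstar u) x := adjoint_inner_right Xstar u x
    rw [h1, hXstar, comp_apply, hP, map_zero, inner_zero_left]
  -- kernel of `Dst` meets the closure of its range trivially
  have hker : ∀ v : K₂, v ∈ closure (Set.range Dst) → Dst v = 0 → v = 0 := by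
    intro v hv h0
    have hcl : IsClosed {w : K₂ | (inner ℂ w v : ℂ) = 0} :=
      isClosed_eq (Continuous.inner continuous_id continuous_const) continuous_const
    have hsub : Set.range Dst ⊆ {w : K₂ | (inner ℂ w v : ℂ) = 0} := by
      rintro _ ⟨u, rfl⟩
      show (inner ℂ (Dst u) v : ℂ) = 0
      rw [show (inner ℂ (Dst u) v : ℂ) = inner ℂ u (adjoint Dst v) from
        (adjoint_inner_right Dst u v).symm, hDadj, h0, inner_zero_right]
    have hz : (inner ℂ v v : ℂ) = 0 := closure_minimal hsub hcl hv
    exact inner_self_eq_zero.mp hz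
  refine ⟨⟨X, ⟨hWoX, hRange⟩, ?_⟩, ?_⟩
  · rintro Y ⟨hY1, hY2⟩
    ext x
    have hd : Dst (Y x - X x) = 0 := by
      have e1 : Dst (Y x) = Wo x := by rw [hY1]; rfl
      have e2 : Dst (X x) = Wo x := by rw [hWoX]; rfl
      rw [map_sub, e1, e2, sub_self]
    have hm : Y x - X x ∈ closure (Set.range Dst) := by
      rw [← hMc]
      have h1 : Y x ∈ M := by rw [← SetLike.mem_coe, hMc]; exact hY2 ⟨x, rfl⟩
      have h2 : X x ∈ M := by rw [← SetLike.mem_coe, hMc]; exact hRange ⟨x, rfl⟩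
      exact sub_mem h1 h2
    exact sub_eq_zero.mp (hker _ hm hd)
  · intro Y hY1 _ a b hab
    apply hWo
    have e1 : Wo a = Dst (Y a) := by rw [hY1]; rfl
    have e2 : Wo b = Dst (Y b) := by rw [hY1]; rfl
    rw [e1, e2, hab]
end
end

section
/- Inertia propagation through a Stein inequality: let A ∈ L(X) have dichotomy with X = X₋ ∔ X₊, A = A₋ ⊕ A₊, where A₊ and A₋⁻¹ have spectral radius < 1, let C ∈ L(X, Y), and suppose H = H* ∈ L(X) satisfies H − A*HA ⪰ C*C. Write H = [H₋ H₀; H₀* H₊] with respect to an orthogonal decomposition X = X₋ ⊕ X₊. If the observability Gramians Σ_{n≥0} (A₊*)^n C₊* C₊ A₊^n and Σ_{n≥1} (A₋*)^{-n} C₋* C₋ A₋^{-n} are both strictly positive-definite (where C = [C₋ C₊]), then H₊ ⪰ Σ_{n≥0} (A₊*)^n C₊* C₊ A₊^n ≻ 0 and −H₋ ⪰ Σ_{n≥1} (A₋*)^{-n} C₋* C₋ A₋^{-n} ≻ 0; in particular H₊ and H₋ are invertible. -/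
/- STATEMENT 11: Inertia propagation through a Stein inequality.  If
`A = A₋ ⊕ A₊` is dichotomous on `X = X₋ ⊕ X₊` (orthogonal), `C = [C₋ C₊]`,
`H = [H₋ H₀; H₀* H₊]` is selfadjoint with `H − A*HA ⪰ C*C`, and the observability
Gramians `G₊ = Σ_{n≥0} (A₊*)ⁿ C₊*C₊ A₊ⁿ` and `G₋ = Σ_{n≥1} (A₋*)⁻ⁿ C₋*C₋ A₋⁻ⁿ`
are strictly positive-definite, then `H₊ ⪰ G₊ ≻ 0` and `−H₋ ⪰ G₋ ≻ 0`; in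
particular `H₊` and `H₋` are boundedly invertible. -/

noncomputable section
open ContinuousLinearMap
open scoped ENNReal
open Filter
open scoped Topology

lemma pow_norm_ev {X : Type*} [NormedAddCommGroup X] [NormedSpace ℂ X] [CompleteSpace X]
    (B : X →L[ℂ] X) (hB : spectralRadius ℂ B < 1) :
    ∃ r : ℝ, 0 < r ∧ r < 1 ∧ ∀ᶠ n : ℕ in atTop, ‖B ^ n‖ ≤ r ^ n := by
  obtain ⟨u, hu1, hu2⟩ := exists_between hB
  set u' : ℝ≥0∞ := max u (1/2) with hu'
  have hu'1 : spectralRadius ℂ B < u' := lt_of_lt_of_le hu1 (le_max_left _ _)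
  have hu'2 : u' < 1 := max_lt hu2 (by norm_num)
  have hne : u' ≠ ⊤ := (hu'2.trans ENNReal.one_lt_top).ne
  refine ⟨u'.toReal, ?_, ?_, ?_⟩
  · have : (0:ℝ≥0∞) < u' := lt_of_lt_of_le (by norm_num) (le_max_right _ _)
    exact ENNReal.toReal_pos this.ne' hne
  · rw [← ENNReal.toReal_one]
    exact ENNReal.toReal_strict_mono ENNReal.one_ne_top hu'2
  · have h1 := (spectrum.pow_nnnorm_pow_one_div_tendsto_nhds_spectralRadius B).eventually_lt_const hu'1
    filter_upwards [h1, eventually_ge_atTop 1] with n hn hn1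
    have hx : (‖B ^ n‖₊ : ℝ≥0∞) ≤ u' ^ n := by
      have := ENNReal.rpow_le_rpow hn.le (by positivity : (0:ℝ) ≤ (n:ℝ))
      rwa [← ENNReal.rpow_mul,
        one_div_mul_cancel (Nat.cast_ne_zero.mpr (by omega) : (n:ℝ) ≠ 0),
        ENNReal.rpow_one, ENNReal.rpow_natCast] at this
    have := ENNReal.toReal_mono (by exact ENNReal.pow_ne_top hne) hx
    simpa [ENNReal.toReal_pow] using this

lemma stein_key {X Y : Type*} [NormedAddCommGroup X] [InnerProductSpace ℂ X] [CompleteSpace X]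
    [NormedAddCommGroup Y] [InnerProductSpace ℂ Y] [CompleteSpace Y]
    (B : X →L[ℂ] X) (hB : spectralRadius ℂ B < 1) (D : X →L[ℂ] Y) (T : X →L[ℂ] X)
    (h : ∀ v : X, (inner ℂ (T (B v)) (B v) : ℂ).re + ‖D v‖ ^ 2 ≤ (inner ℂ (T v) v : ℂ).re)
    (G : X →L[ℂ] X)
    (hG : G = ∑' n : ℕ, ((adjoint B) ^ n) ∘L ((adjoint D) ∘L D) ∘L (B ^ n)) :
    ∀ v : X, (inner ℂ (G v) v : ℂ).re ≤ (inner ℂ (T v) v : ℂ).re := by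
  obtain ⟨r, hr0, hr1, hev⟩ := pow_norm_ev B hB
  set f : ℕ → (X →L[ℂ] X) := fun n => ((adjoint B) ^ n) ∘L ((adjoint D) ∘L D) ∘L (B ^ n) with hf
  have hpow : ∀ n : ℕ, (adjoint B) ^ n = adjoint (B ^ n) := fun n => by
    simp only [← star_eq_adjoint, ← star_pow]
  have hr2 : r ^ 2 < 1 := by nlinarith
  have hsum : Summable f := by
    refine Summable.of_norm_bounded_eventually_nat (g := fun n => (‖D‖ * ‖D‖) * (r ^ 2) ^ n)
      ((summable_geometric_of_lt_one (by positivity) hr2).mul_left _) ?_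
    filter_upwards [hev] with n hn
    have h1 : ‖f n‖ ≤ ‖(adjoint B) ^ n‖ * (‖(adjoint D) ∘L D‖ * ‖B ^ n‖) := by
      calc ‖f n‖ ≤ ‖(adjoint B) ^ n‖ * ‖((adjoint D) ∘L D) ∘L (B ^ n)‖ := opNorm_comp_le _ _
        _ ≤ ‖(adjoint B) ^ n‖ * (‖(adjoint D) ∘L D‖ * ‖B ^ n‖) :=
            mul_le_mul_of_nonneg_left (opNorm_comp_le _ _) (norm_nonneg _)
    have h2 : ‖(adjoint B) ^ n‖ = ‖B ^ n‖ := by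
      rw [hpow]; exact ContinuousLinearMap.adjoint.norm_map (B ^ n)
    have h3 : ‖(adjoint D) ∘L D‖ = ‖D‖ * ‖D‖ := norm_adjoint_comp_self D
    have hBn : ‖B ^ n‖ ≤ r ^ n := hn
    have hBn0 : (0:ℝ) ≤ ‖B ^ n‖ := norm_nonneg _
    have hrn : (0:ℝ) ≤ r ^ n := by positivity
    rw [h2, h3] at h1
    calc ‖f n‖ ≤ ‖B ^ n‖ * ((‖D‖ * ‖D‖) * ‖B ^ n‖) := h1
      _ ≤ r ^ n * ((‖D‖ * ‖D‖) * r ^ n) := by gcongr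
      _ = (‖D‖ * ‖D‖) * (r ^ 2) ^ n := by ring
  intro v
  -- scalar HasSum
  have hopsum : HasSum f G := by rw [hG]; exact hsum.hasSum
  have happ : HasSum (fun n => f n v) (G v) :=
    hopsum.mapL (ContinuousLinearMap.apply ℂ X v)
  set φ : X →L[ℝ] ℝ := Complex.reCLM.comp ((innerSL ℂ v).restrictScalars ℝ) with hφ
  have hφapp : ∀ w : X, φ w = (inner ℂ w v : ℂ).re := fun w => by
    simp only [hφ, ContinuousLinearMap.coe_comp', Function.comp_apply,
      Complex.reCLM_apply, ContinuousLinearMap.coe_restrictScalars', innerSL_apply_apply]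
    simpa only [RCLike.re_to_complex] using inner_re_symm (𝕜 := ℂ) v w
  have hre : HasSum (fun n => (inner ℂ ((f n) v) v : ℂ).re) ((inner ℂ (G v) v : ℂ).re) := by
    have h' := happ.mapL φ
    simpa only [hφapp] using h'
  have hterm : ∀ n : ℕ, (inner ℂ ((f n) v) v : ℂ).re = ‖D ((B ^ n) v)‖ ^ 2 := by
    intro n
    have : (inner ℂ ((f n) v) v : ℂ) = inner ℂ (D ((B ^ n) v)) (D ((B ^ n) v)) := by
      simp only [hf, ContinuousLinearMap.comp_apply, hpow, adjoint_inner_left]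
    rw [this, inner_self_eq_norm_sq_to_K]
    simp [← Complex.ofReal_pow]
  rw [funext hterm] at hre
  -- partial sums bound
  have hpart : ∀ N : ℕ, (∑ n ∈ Finset.range N, ‖D ((B ^ n) v)‖ ^ 2)
      + (inner ℂ (T ((B ^ N) v)) ((B ^ N) v) : ℂ).re ≤ (inner ℂ (T v) v : ℂ).re := by
    intro N
    induction N with
    | zero => simp
    | succ N ih =>
      have hstep := h ((B ^ N) v)
      have hBty : B ((B ^ N) v) = (B ^ (N + 1)) v := by
        rw [pow_succ' B N]; rfl
      rw [hBty] at hstep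
      rw [Finset.sum_range_succ]
      linarith
  -- tail tends to zero
  have htail : Filter.Tendsto (fun N : ℕ => (inner ℂ (T ((B ^ N) v)) ((B ^ N) v) : ℂ).re)
      atTop (𝓝 0) := by
    apply squeeze_zero_norm' (a := fun N => (‖T‖ * ‖v‖ ^ 2) * (r ^ 2) ^ N)
    · filter_upwards [hev] with n hn
      have h1 : ‖(inner ℂ (T ((B ^ n) v)) ((B ^ n) v) : ℂ).re‖
          ≤ ‖T ((B ^ n) v)‖ * ‖(B ^ n) v‖ := by
        refine le_trans ?_ (norm_inner_le_norm (𝕜 := ℂ) _ _)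
        exact Complex.abs_re_le_norm _
      have h2 : ‖T ((B ^ n) v)‖ ≤ ‖T‖ * ‖(B ^ n) v‖ := le_opNorm _ _
      have h3 : ‖(B ^ n) v‖ ≤ r ^ n * ‖v‖ := by
        refine (le_opNorm _ _).trans ?_
        gcongr
      have h0 : (0:ℝ) ≤ ‖(B ^ n) v‖ := norm_nonneg _
      have h4 : (0:ℝ) ≤ r ^ n := by positivity
      calc ‖(inner ℂ (T ((B ^ n) v)) ((B ^ n) v) : ℂ).re‖
          ≤ ‖T‖ * ‖(B ^ n) v‖ * ‖(B ^ n) v‖ :=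
            h1.trans (mul_le_mul_of_nonneg_right h2 h0)
        _ ≤ ‖T‖ * (r ^ n * ‖v‖) * (r ^ n * ‖v‖) := by gcongr
        _ = (‖T‖ * ‖v‖ ^ 2) * (r ^ 2) ^ n := by ring
    · have hz := (tendsto_pow_atTop_nhds_zero_of_lt_one (by positivity : (0:ℝ) ≤ r ^ 2)
        hr2).const_mul (‖T‖ * ‖v‖ ^ 2)
      rwa [mul_zero] at hz
  have hlim := hre.tendsto_sum_nat
  have hrhs : Filter.Tendsto
      (fun N : ℕ => (inner ℂ (T v) v : ℂ).re - (inner ℂ (T ((B ^ N) v)) ((B ^ N) v) : ℂ).re)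
      atTop (𝓝 ((inner ℂ (T v) v : ℂ).re - 0)) := (tendsto_const_nhds).sub htail
  have := le_of_tendsto_of_tendsto' hlim hrhs (fun N => by linarith [hpart N])
  simpa using this

lemma isUnit_of_coercive {Z : Type*} [NormedAddCommGroup Z] [InnerProductSpace ℂ Z]
    [CompleteSpace Z] (T : Z →L[ℂ] Z) (δ : ℝ) (hδ : 0 < δ)
    (hT : ∀ v : Z, δ * ‖v‖ ^ 2 ≤ (inner ℂ (T v) v : ℂ).re) : IsUnit T := by
  refine isUnit_of_forall_le_norm_inner_map T (c := δ.toNNReal)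
    (Real.toNNReal_pos.mpr hδ) fun x => ?_
  have h1 : δ * ‖x‖ ^ 2 ≤ ‖(inner ℂ (T x) x : ℂ)‖ := by
    refine (hT x).trans ?_
    exact Complex.re_le_norm _
  calc ‖x‖ ^ 2 * (δ.toNNReal : ℝ) = δ * ‖x‖ ^ 2 := by
        rw [Real.coe_toNNReal _ hδ.le]; ring
    _ ≤ ‖(inner ℂ (T x) x : ℂ)‖ := h1


theorem inertia_stein_inequality
    {Xm Xp Y : Type*}
    [NormedAddCommGroup Xm] [InnerProductSpace ℂ Xm] [CompleteSpace Xm]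
    [NormedAddCommGroup Xp] [InnerProductSpace ℂ Xp] [CompleteSpace Xp]
    [NormedAddCommGroup Y] [InnerProductSpace ℂ Y] [CompleteSpace Y]
    -- the dichotomous state operator `A = A₋ ⊕ A₊`
    (Am : Xm →L[ℂ] Xm) (Ap : Xp →L[ℂ] Xp) (AmInv : Xm →L[ℂ] Xm)
    (hAmInv₁ : Am ∘L AmInv = 1) (hAmInv₂ : AmInv ∘L Am = 1)
    (hAp : spectralRadius ℂ Ap < 1) (hAm : spectralRadius ℂ AmInv < 1)
    -- the output operator `C = [C₋ C₊]`
    (Cm : Xm →L[ℂ] Y) (Cp : Xp →L[ℂ] Y)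
    -- the blocks of the selfadjoint operator `H = [H₋ H₀; H₀* H₊]` on `X₋ ⊕ X₊`
    (Hm : Xm →L[ℂ] Xm) (H0 : Xp →L[ℂ] Xm) (Hp : Xp →L[ℂ] Xp)
    (hHm : IsSelfAdjoint Hm) (hHp : IsSelfAdjoint Hp)
    -- the Stein inequality `H − A*HA ⪰ C*C`, written via quadratic forms at
    -- `v = (x₋, x₊) ∈ X₋ ⊕ X₊`, where
    -- `⟨Hv, v⟩ = ⟨H₋x₋,x₋⟩ + 2Re⟨H₀x₊,x₋⟩ + ⟨H₊x₊,x₊⟩`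
    (hStein : ∀ (xm : Xm) (xp : Xp),
      ((inner ℂ (Hm (Am xm)) (Am xm) : ℂ).re + 2 * (inner ℂ (H0 (Ap xp)) (Am xm) : ℂ).re
          + (inner ℂ (Hp (Ap xp)) (Ap xp) : ℂ).re)
        + ‖Cm xm + Cp xp‖ ^ 2
      ≤ (inner ℂ (Hm xm) xm : ℂ).re + 2 * (inner ℂ (H0 xp) xm : ℂ).re
          + (inner ℂ (Hp xp) xp : ℂ).re)
    -- the observability Gramians
    (Gp : Xp →L[ℂ] Xp)
    (hGp : Gp = ∑' n : ℕ, ((adjoint Ap) ^ n) ∘L ((adjoint Cp) ∘L Cp) ∘L (Ap ^ n))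
    (Gm : Xm →L[ℂ] Xm)
    (hGm : Gm = ∑' n : ℕ,
      ((adjoint AmInv) ^ (n + 1)) ∘L ((adjoint Cm) ∘L Cm) ∘L (AmInv ^ (n + 1)))
    -- both Gramians strictly positive-definite
    (hGpPos : ∃ δ : ℝ, 0 < δ ∧ ∀ v : Xp, δ * ‖v‖ ^ 2 ≤ (inner ℂ (Gp v) v : ℂ).re)
    (hGmPos : ∃ δ : ℝ, 0 < δ ∧ ∀ v : Xm, δ * ‖v‖ ^ 2 ≤ (inner ℂ (Gm v) v : ℂ).re) :
    -- `H₊ ⪰ G₊` and `−H₋ ⪰ G₋`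
    (∀ v : Xp, (inner ℂ (Gp v) v : ℂ).re ≤ (inner ℂ (Hp v) v : ℂ).re) ∧
    (∀ v : Xm, (inner ℂ (Gm v) v : ℂ).re ≤ (inner ℂ ((-Hm) v) v : ℂ).re) ∧
    -- `H₊ ≻ 0` and `−H₋ ≻ 0`
    (∃ δ : ℝ, 0 < δ ∧ ∀ v : Xp, δ * ‖v‖ ^ 2 ≤ (inner ℂ (Hp v) v : ℂ).re) ∧
    (∃ δ : ℝ, 0 < δ ∧ ∀ v : Xm, δ * ‖v‖ ^ 2 ≤ (inner ℂ ((-Hm) v) v : ℂ).re) ∧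
    -- in particular `H₊` and `H₋` are boundedly invertible
    IsUnit Hp ∧ IsUnit Hm := by
  
  -- the plus case
  have hp' : ∀ v : Xp,
      (inner ℂ (Hp (Ap v)) (Ap v) : ℂ).re + ‖Cp v‖ ^ 2 ≤ (inner ℂ (Hp v) v : ℂ).re := by
    intro v
    have := hStein 0 v
    simpa using this
  have hGple := stein_key Ap hAp Cp Hp hp' Gp hGp
  -- the minus case
  have base : ∀ xm : Xm,
      (inner ℂ (Hm (Am xm)) (Am xm) : ℂ).re + ‖Cm xm‖ ^ 2 ≤ (inner ℂ (Hm xm) xm : ℂ).re := by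
    intro xm
    have := hStein xm 0
    simpa using this
  have hid : ∀ v : Xm, Am (AmInv v) = v := fun v => by
    have := congrArg (fun f : Xm →L[ℂ] Xm => f v) hAmInv₁
    simpa using this
  have hm' : ∀ v : Xm, (inner ℂ ((-Hm) (AmInv v)) (AmInv v) : ℂ).re
      + ‖(Cm ∘L AmInv) v‖ ^ 2 ≤ (inner ℂ ((-Hm) v) v : ℂ).re := by
    intro v
    have hb := base (AmInv v)
    rw [hid v] at hb
    simp only [ContinuousLinearMap.neg_apply, inner_neg_left, Complex.neg_re,
      ContinuousLinearMap.coe_comp', Function.comp_apply]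
    linarith
  have hGmEq : Gm = ∑' n : ℕ, ((adjoint AmInv) ^ n)
      ∘L ((adjoint (Cm ∘L AmInv)) ∘L (Cm ∘L AmInv)) ∘L (AmInv ^ n) := by
    rw [hGm]
    refine tsum_congr fun n => ?_
    rw [adjoint_comp, pow_succ (adjoint AmInv) n, pow_succ' AmInv n]
    ext x
    simp [ContinuousLinearMap.mul_apply]
  have hGmle := stein_key AmInv hAm (Cm ∘L AmInv) (-Hm) hm' Gm hGmEq
  obtain ⟨δp, hδp, hδpv⟩ := hGpPos
  obtain ⟨δm, hδm, hδmv⟩ := hGmPos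
  have hHpPos : ∀ v : Xp, δp * ‖v‖ ^ 2 ≤ (inner ℂ (Hp v) v : ℂ).re :=
    fun v => (hδpv v).trans (hGple v)
  have hHmPos : ∀ v : Xm, δm * ‖v‖ ^ 2 ≤ (inner ℂ ((-Hm) v) v : ℂ).re :=
    fun v => (hδmv v).trans (hGmle v)
  refine ⟨hGple, hGmle, ⟨δp, hδp, hHpPos⟩, ⟨δm, hδm, hHmPos⟩, ?_, ?_⟩
  · exact isUnit_of_coercive Hp δp hδp hHpPos
  · have := (isUnit_of_coercive (-Hm) δm hδm hHmPos).neg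
    rwa [neg_neg] at this
end
end

section
/- Trajectory interpolation for dichotomous ℓ²-exactly controllable systems: let Σ be a dichotomous system x(n+1) = A x(n) + B u(n), y(n) = C x(n) + D u(n) whose controllability operator W_c : ℓ²(ℤ,U) → X (defined by W_c u = x(0), where x is the unique ℓ² state trajectory determined by input u) is surjective. Then for every u₀ ∈ U and x₀ ∈ X there exists an ℓ²-admissible system trajectory (u, x, y) with u(0) = u₀ and x(0) = x₀. -/
/- STATEMENT 13: Trajectory interpolation for dichotomously ℓ²-exactly controllable
systems: if the controllability operator `W_c : ℓ²(ℤ,U) → X`, `u ↦ x(0)` (with `x`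
the unique ℓ² state trajectory for input `u`) is surjective, then for every `u₀ ∈ U`
and `x₀ ∈ X` there is an ℓ²-admissible trajectory `(u, x, y)` with `u(0) = u₀` and
`x(0) = x₀`.  The state space is `X = X₋ ⊕ X₊` with `A = A₋ ⊕ A₊`, `A₊` and `A₋⁻¹`
of spectral radius `< 1`. -/

noncomputable section
open ContinuousLinearMap
open scoped ENNReal NNReal

section AuxLemmas

open Filter

/-- From `spectralRadius < 1`, the operator powers tend to zero in norm
(consequence of Gelfand's formula). -/
private lemma aux_tendsto_pow_norm {A : Type*} [NormedRing A] [NormedAlgebra ℂ A]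
    [CompleteSpace A] {a : A} (ha : spectralRadius ℂ a < 1) :
    Tendsto (fun k : ℕ => ‖a ^ k‖) atTop (nhds 0) := by
  obtain ⟨c, hc1, hc2⟩ := exists_between ha
  have hct : c ≠ ⊤ := (hc2.trans_le le_top).ne
  lift c to ℝ≥0 using hct
  have hr1 : (c : ℝ) < 1 := by exact_mod_cast hc2
  have hgel := spectrum.pow_nnnorm_pow_one_div_tendsto_nhds_spectralRadius a
  have hev : ∀ᶠ k : ℕ in atTop, ‖a ^ k‖ ≤ (c : ℝ) ^ k := by
    filter_upwards [hgel.eventually_lt_const hc1, eventually_ge_atTop 1] with k hk hk1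
    have hkne : (k : ℝ) ≠ 0 := by positivity
    have h2 : ((‖a ^ k‖₊ : ℝ≥0∞) ^ (1 / (k : ℝ))) ^ (k : ℝ) < (c : ℝ≥0∞) ^ (k : ℝ) :=
      ENNReal.rpow_lt_rpow hk (by positivity)
    rw [← ENNReal.rpow_mul, one_div, inv_mul_cancel₀ hkne, ENNReal.rpow_one] at h2
    rw [ENNReal.rpow_natCast] at h2
    have h3 : ‖a ^ k‖₊ < c ^ k := by exact_mod_cast h2
    have h4 : (‖a ^ k‖₊ : ℝ) ≤ ((c ^ k : ℝ≥0) : ℝ) := by exact_mod_cast h3.le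
    simpa using h4
  exact squeeze_zero' (Eventually.of_forall fun _ => norm_nonneg _) hev
    (tendsto_pow_atTop_nhds_zero_of_lt_one c.coe_nonneg hr1)

/-- If `‖v‖ ≤ ‖a ^ k‖ * M` for all `k` and `‖a ^ k‖ → 0`, then `v = 0`. -/
private lemma aux_zero_of_le {A E : Type*} [NormedRing A] [NormedAddCommGroup E]
    {a : A} (ha : Tendsto (fun k : ℕ => ‖a ^ k‖) atTop (nhds 0))
    {v : E} (M : ℝ) (h : ∀ k : ℕ, ‖v‖ ≤ ‖a ^ k‖ * M) : v = 0 := by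
  have hlim : Tendsto (fun k : ℕ => ‖a ^ k‖ * M) atTop (nhds 0) := by
    simpa using ha.mul_const M
  have : ‖v‖ ≤ 0 := ge_of_tendsto' hlim h
  exact norm_le_zero_iff.mp this

/-- An ℓ² sequence is bounded. -/
private lemma aux_bdd {E : Type*} [NormedAddCommGroup E] {f : ℤ → E}
    (hf : Memℓp f 2) : ∃ M : ℝ, ∀ n : ℤ, ‖f n‖ ≤ M := by
  obtain ⟨M, hM⟩ := (hf.of_exponent_ge (le_top : (2:ℝ≥0∞) ≤ ⊤)).bddAbove
  exact ⟨M, fun n => hM (Set.mem_range_self n)⟩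

/-- Domination criterion for `Memℓp · 2`. -/
private lemma aux_of_le {E F : Type*} [NormedAddCommGroup E] [NormedAddCommGroup F]
    {f : ℤ → E} {g : ℤ → F} (hg : Memℓp g 2) (h : ∀ n, ‖f n‖ ≤ ‖g n‖) :
    Memℓp f 2 := by
  apply memℓp_gen
  have hp : (0:ℝ) < (2:ℝ≥0∞).toReal := by norm_num
  refine Summable.of_nonneg_of_le (fun n => ?_) (fun n => ?_) (hg.summable hp)
  · positivity
  · exact Real.rpow_le_rpow (norm_nonneg _) (h n) hp.le

/-- Shifting preserves `Memℓp · 2`. -/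
private lemma aux_shift {E : Type*} [NormedAddCommGroup E] {f : ℤ → E}
    (hf : Memℓp f 2) : Memℓp (fun n : ℤ => f (n - 1)) 2 := by
  apply memℓp_gen
  have hp : (0:ℝ) < (2:ℝ≥0∞).toReal := by norm_num
  have hs := hf.summable hp
  have h2 := ((Equiv.subRight (1:ℤ)).summable_iff
    (f := fun n : ℤ => ‖f n‖ ^ (2:ℝ≥0∞).toReal)).mpr hs
  simpa [Function.comp_def, Equiv.subRight] using h2

/-- Applying a continuous linear map preserves `Memℓp · 2`. -/
private lemma aux_clm {E F : Type*} [NormedAddCommGroup E] [NormedSpace ℂ E]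
    [NormedAddCommGroup F] [NormedSpace ℂ F] (L : E →L[ℂ] F) {f : ℤ → E}
    (hf : Memℓp f 2) : Memℓp (fun n => L (f n)) 2 := by
  apply memℓp_gen
  have hp : (0:ℝ) < (2:ℝ≥0∞).toReal := by norm_num
  refine Summable.of_nonneg_of_le (fun n => ?_) (fun n => ?_)
    ((hf.summable hp).mul_left (‖L‖ ^ (2:ℝ≥0∞).toReal))
  · positivity
  · calc ‖L (f n)‖ ^ (2:ℝ≥0∞).toReal
        ≤ (‖L‖ * ‖f n‖) ^ (2:ℝ≥0∞).toReal :=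
          Real.rpow_le_rpow (norm_nonneg _) (L.le_opNorm _) hp.le
      _ = ‖L‖ ^ (2:ℝ≥0∞).toReal * ‖f n‖ ^ (2:ℝ≥0∞).toReal :=
          Real.mul_rpow (norm_nonneg _) (norm_nonneg _)

end AuxLemmas

theorem trajectory_interpolation
    {U Xm Xp Y : Type*}
    [NormedAddCommGroup U] [InnerProductSpace ℂ U] [CompleteSpace U]
    [NormedAddCommGroup Xm] [InnerProductSpace ℂ Xm] [CompleteSpace Xm]
    [NormedAddCommGroup Xp] [InnerProductSpace ℂ Xp] [CompleteSpace Xp]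
    [NormedAddCommGroup Y] [InnerProductSpace ℂ Y] [CompleteSpace Y]
    -- dichotomous state operator `A = A₋ ⊕ A₊` on `X = X₋ × X₊`
    (Am : Xm →L[ℂ] Xm) (Ap : Xp →L[ℂ] Xp) (AmInv : Xm →L[ℂ] Xm)
    (hAmInv₁ : Am ∘L AmInv = 1) (hAmInv₂ : AmInv ∘L Am = 1)
    (hAp : spectralRadius ℂ Ap < 1) (hAm : spectralRadius ℂ AmInv < 1)
    (A : Xm × Xp →L[ℂ] Xm × Xp) (hA : A = Am.prodMap Ap)
    (B : U →L[ℂ] Xm × Xp) (C : Xm × Xp →L[ℂ] Y) (D : U →L[ℂ] Y)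
    -- for each ℓ² input there is a unique ℓ² state trajectory (dichotomy)
    (hstate : ∀ u : ℤ → U, Memℓp u 2 →
      ∃! x : ℤ → Xm × Xp, Memℓp x 2 ∧ ∀ n : ℤ, x (n + 1) = A (x n) + B (u n))
    -- ℓ²-exact controllability: `W_c` is surjective
    (hWc : ∀ x₀ : Xm × Xp, ∃ (u : ℤ → U) (x : ℤ → Xm × Xp),
      Memℓp u 2 ∧ Memℓp x 2 ∧ (∀ n : ℤ, x (n + 1) = A (x n) + B (u n)) ∧ x 0 = x₀) :
    -- trajectory interpolation
    ∀ (u₀ : U) (x₀ : Xm × Xp),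
      ∃ (u : ℤ → U) (x : ℤ → Xm × Xp) (y : ℤ → Y),
        Memℓp u 2 ∧ Memℓp x 2 ∧ Memℓp y 2 ∧
        (∀ n : ℤ, x (n + 1) = A (x n) + B (u n) ∧ y n = C (x n) + D (u n)) ∧
        u 0 = u₀ ∧ x 0 = x₀ := by
  intro u₀ x₀
  have hApLim := aux_tendsto_pow_norm hAp
  have hAmLim := aux_tendsto_pow_norm hAm
  have hA1 : ∀ v : Xm × Xp, (A v).1 = Am v.1 := by intro v; rw [hA]; rfl
  have hA2 : ∀ v : Xm × Xp, (A v).2 = Ap v.2 := by intro v; rw [hA]; rfl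
  have hMInv : ∀ v : Xm, AmInv (Am v) = v := by
    intro v
    have := congrArg (fun L : Xm →L[ℂ] Xm => L v) hAmInv₂
    simpa using this
  -- Lemma M: a bounded sequence homogeneous on `n ≥ n₀` has vanishing `Xm`-part at `n₀`.
  have lemM : ∀ (d : ℤ → Xm × Xp) (M : ℝ) (n₀ : ℤ), (∀ n, ‖d n‖ ≤ M) →
      (∀ n : ℤ, n₀ ≤ n → d (n + 1) = A (d n)) → (d n₀).1 = 0 := by
    intro d M n₀ hb hrec
    have key : ∀ k : ℕ, (d n₀).1 = (AmInv ^ k) ((d (n₀ + k)).1) := by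
      intro k
      induction k with
      | zero => simp
      | succ k ih =>
        have h1 : d (n₀ + (k:ℤ) + 1) = A (d (n₀ + (k:ℤ))) := hrec _ (by omega)
        have h2 : (d (n₀ + (k:ℤ))).1 = AmInv ((d (n₀ + ((k:ℕ)+1 : ℕ))).1) := by
          have h3 : (d (n₀ + (k:ℤ) + 1)).1 = Am ((d (n₀ + (k:ℤ))).1) := by
            rw [h1, hA1]
          have h4 := congrArg AmInv h3
          rw [hMInv] at h4
          have hidx : n₀ + (((k:ℕ)+1 : ℕ) : ℤ) = n₀ + (k:ℤ) + 1 := by push_cast; ring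
          rw [hidx, ← h4]
        rw [ih, h2, ← ContinuousLinearMap.mul_apply, ← pow_succ]
    refine aux_zero_of_le hAmLim M (fun k => ?_)
    calc ‖(d n₀).1‖ = ‖(AmInv ^ k) ((d (n₀ + k)).1)‖ := by rw [← key k]
      _ ≤ ‖AmInv ^ k‖ * ‖(d (n₀ + k)).1‖ := (AmInv ^ k).le_opNorm _
      _ ≤ ‖AmInv ^ k‖ * M := by
          refine mul_le_mul_of_nonneg_left ?_ (norm_nonneg _)
          exact (_root_.norm_fst_le _).trans (hb _)
  -- Lemma P: a bounded sequence homogeneous on `n < 0` has vanishing `Xp`-part at `0`.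
  have lemP : ∀ (d : ℤ → Xm × Xp) (M : ℝ), (∀ n, ‖d n‖ ≤ M) →
      (∀ n : ℤ, n < 0 → d (n + 1) = A (d n)) → (d 0).2 = 0 := by
    intro d M hb hrec
    have key : ∀ k : ℕ, (d 0).2 = (Ap ^ k) ((d (-(k:ℤ))).2) := by
      intro k
      induction k with
      | zero => simp
      | succ k ih =>
        have h1 : d (-((k:ℤ)+1) + 1) = A (d (-((k:ℤ)+1))) := hrec _ (by omega)
        have h2 : (d (-(k:ℤ))).2 = Ap ((d (-(((k:ℕ)+1:ℕ)):ℤ)).2) := by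
          have h3 : (-((k:ℤ)+1) + 1) = -(k:ℤ) := by ring
          rw [h3] at h1
          have hidx : (-((((k:ℕ)+1:ℕ)):ℤ)) = -((k:ℤ)+1) := by push_cast; ring
          rw [hidx, h1, hA2]
        rw [ih, h2, ← ContinuousLinearMap.mul_apply, ← pow_succ]
    refine aux_zero_of_le hApLim M (fun k => ?_)
    calc ‖(d 0).2‖ = ‖(Ap ^ k) ((d (-(k:ℤ))).2)‖ := by rw [← key k]
      _ ≤ ‖Ap ^ k‖ * ‖(d (-(k:ℤ))).2‖ := (Ap ^ k).le_opNorm _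
      _ ≤ ‖Ap ^ k‖ * M := by
          refine mul_le_mul_of_nonneg_left ?_ (norm_nonneg _)
          exact (_root_.norm_snd_le _).trans (hb _)
  -- Step A: trajectory for the delta input at time 0 with value u₀.
  set e : ℤ → U := fun n => if n = 0 then u₀ else 0 with he
  have heL2 : Memℓp e 2 := by
    refine (memℓp_zero ?_).of_exponent_ge zero_le
    refine Set.Finite.subset (Set.finite_singleton 0) (fun n hn => ?_)
    simp only [Set.mem_setOf_eq, he] at hn
    by_contra hne
    simp only [Set.mem_singleton_iff] at hne
    exact hn (if_neg hne)
  obtain ⟨ye, ⟨hyeL2, hyeRec⟩, -⟩ := hstate e heL2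
  set t : Xm × Xp := x₀ - ye 0 with ht
  -- Step B1: reach `(t.1, 0)` with an input supported on `n ≥ 1`.
  obtain ⟨w, z, hwL2, hzL2, hzRec, hz0⟩ := hWc (Am t.1, 0)
  set w₁ : ℤ → U := fun n => if 1 ≤ n then w (n - 1) else 0 with hw₁
  have hw₁L2 : Memℓp w₁ 2 := by
    refine aux_of_le (aux_shift hwL2) (fun n => ?_)
    simp only [hw₁]
    split
    · exact le_refl _
    · simp
  obtain ⟨z₁, ⟨hz₁L2, hz₁Rec⟩, -⟩ := hstate w₁ hw₁L2
  obtain ⟨M₁, hM₁⟩ := aux_bdd hz₁L2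
  obtain ⟨Mz, hMz⟩ := aux_bdd hzL2
  have hz₁p : (z₁ 0).2 = 0 := by
    refine lemP z₁ M₁ hM₁ (fun n hn => ?_)
    have h0 : w₁ n = 0 := if_neg (by omega)
    rw [hz₁Rec n, h0, map_zero, add_zero]
  have hz₁m : (z₁ 0).1 = t.1 := by
    set d1 : ℤ → Xm × Xp := fun n => z₁ n - z (n - 1) with hd1
    have hd : ∀ n : ℤ, 1 ≤ n → d1 (n + 1) = A (d1 n) := by
      intro n hn
      have hw : w₁ n = w (n - 1) := if_pos hn
      simp only [hd1]
      rw [hz₁Rec n, show n + 1 - 1 = (n - 1) + 1 by ring, hzRec (n - 1), hw, map_sub]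
      abel
    have hdm : (d1 (1:ℤ)).1 = 0 :=
      lemM d1 (M₁ + Mz) 1
        (fun n => (norm_sub_le _ _).trans (add_le_add (hM₁ n) (hMz (n - 1)))) hd
    have h11 : (z₁ 1).1 = Am t.1 := by
      simp only [hd1, Prod.fst_sub] at hdm
      rw [show (1:ℤ) - 1 = 0 by norm_num] at hdm
      have := sub_eq_zero.mp hdm
      rw [this, hz0]
    have h10 : (z₁ 1).1 = Am ((z₁ 0).1) := by
      have hr := hz₁Rec 0
      have h0 : w₁ 0 = 0 := if_neg (by omega)
      rw [h0, map_zero, add_zero, zero_add] at hr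
      rw [hr, hA1]
    have hAmEq : Am ((z₁ 0).1) = Am t.1 := by rw [← h10, h11]
    have := congrArg AmInv hAmEq
    rwa [hMInv, hMInv] at this
  have hz₁0 : z₁ 0 = (t.1, 0) := Prod.ext_iff.mpr ⟨hz₁m, hz₁p⟩
  -- Step B2: reach `(0, t.2)` with an input supported on `n < 0`.
  obtain ⟨v, s, hvL2, hsL2, hsRec, hs0⟩ := hWc (0, t.2)
  set w₂ : ℤ → U := fun n => if n < 0 then v n else 0 with hw₂
  have hw₂L2 : Memℓp w₂ 2 := by
    refine aux_of_le hvL2 (fun n => ?_)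
    simp only [hw₂]
    split
    · exact le_refl _
    · simp
  obtain ⟨z₂, ⟨hz₂L2, hz₂Rec⟩, -⟩ := hstate w₂ hw₂L2
  obtain ⟨M₂, hM₂⟩ := aux_bdd hz₂L2
  obtain ⟨Ms, hMs⟩ := aux_bdd hsL2
  have hz₂m : (z₂ 0).1 = 0 := by
    refine lemM z₂ M₂ 0 hM₂ (fun n hn => ?_)
    have h0 : w₂ n = 0 := if_neg (by omega)
    rw [hz₂Rec n, h0, map_zero, add_zero]
  have hz₂p : (z₂ 0).2 = t.2 := by
    set d2 : ℤ → Xm × Xp := fun n => s n - z₂ n with hd2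
    have hd : ∀ n : ℤ, n < 0 → d2 (n + 1) = A (d2 n) := by
      intro n hn
      have hw : w₂ n = v n := if_pos hn
      simp only [hd2]
      rw [hsRec n, hz₂Rec n, hw, map_sub]
      abel
    have hdp : (d2 (0:ℤ)).2 = 0 :=
      lemP d2 (Ms + M₂)
        (fun n => (norm_sub_le _ _).trans (add_le_add (hMs n) (hM₂ n))) hd
    simp only [hd2, Prod.snd_sub] at hdp
    have := sub_eq_zero.mp hdp
    rw [← this, hs0]
  have hz₂0 : z₂ 0 = (0, t.2) := Prod.ext_iff.mpr ⟨hz₂m, hz₂p⟩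
  -- Assemble the final trajectory.
  have huL2 : Memℓp (fun n => e n + w₁ n + w₂ n) 2 := (heL2.add hw₁L2).add hw₂L2
  have hxL2 : Memℓp (fun n => ye n + z₁ n + z₂ n) 2 := (hyeL2.add hz₁L2).add hz₂L2
  refine ⟨fun n => e n + w₁ n + w₂ n, fun n => ye n + z₁ n + z₂ n,
    fun n => C (ye n + z₁ n + z₂ n) + D (e n + w₁ n + w₂ n),
    huL2, hxL2, (aux_clm C hxL2).add (aux_clm D huL2), fun n => ⟨?_, rfl⟩, ?_, ?_⟩
  · show ye (n + 1) + z₁ (n + 1) + z₂ (n + 1) = A (ye n + z₁ n + z₂ n) + B (e n + w₁ n + w₂ n)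
    rw [hyeRec n, hz₁Rec n, hz₂Rec n, map_add, map_add, map_add, map_add]
    abel
  · show e 0 + w₁ 0 + w₂ 0 = u₀
    have h1 : e 0 = u₀ := if_pos rfl
    have h2 : w₁ 0 = 0 := if_neg (by omega)
    have h3 : w₂ 0 = 0 := if_neg (by omega)
    rw [h1, h2, h3, add_zero, add_zero]
  · show ye 0 + z₁ 0 + z₂ 0 = x₀
    rw [hz₁0, hz₂0]
    have hsum : ((t.1, 0) : Xm × Xp) + (0, t.2) = t := by
      rw [Prod.mk_add_mk, add_zero, zero_add]
    rw [add_assoc, hsum, ht]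
    abel
end
end

section
/- Any storage function is squeezed between the available storage and required supply: let Σ be a dichotomous system with ‖F_Σ‖_{∞,𝕋} ≤ 1 and W_c surjective. Define S_a(x₀) = sup over ℓ²-admissible trajectories with x(0)=x₀ of Σ_{n≥0}(‖y(n)‖² − ‖u(n)‖²), and S_r(x₀) = inf over such trajectories of Σ_{n<0}(‖u(n)‖² − ‖y(n)‖²). If S̃ is any storage function for Σ (continuous at 0, S̃(0)=0, dissipation inequality along ℓ²-admissible trajectories), then S_a(x₀) ≤ S̃(x₀) ≤ S_r(x₀) for all x₀ ∈ X. -/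
/- STATEMENT 14: Any storage function is squeezed between the available storage
`S_a` and the required supply `S_r`: for a dichotomous system with `‖F_Σ‖_{∞,𝕋} ≤ 1`
(equivalently, `‖T_Σ‖ ≤ 1`, i.e. `Σ‖y‖² ≤ Σ‖u‖²` along all ℓ²-admissible
trajectories) and surjective controllability operator `W_c`, every storage function
`S̃` satisfies `S_a(x₀) ≤ S̃(x₀) ≤ S_r(x₀)` for all `x₀ ∈ X`, where
`S_a(x₀) = sup { Σ_{n≥0} (‖y(n)‖² − ‖u(n)‖²) }` and
`S_r(x₀) = inf { Σ_{n<0} (‖u(n)‖² − ‖y(n)‖²) }`, both over ℓ²-admissible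
trajectories with `x(0) = x₀`. -/

noncomputable section
open ContinuousLinearMap
open scoped ENNReal

lemma aux_l2_summable_sq {ι E : Type*} [NormedAddCommGroup E] {f : ι → E}
    (hf : Memℓp f 2) : Summable fun n => ‖f n‖ ^ 2 := by
  have := hf.summable (by norm_num)
  simpa using this

lemma aux_tendsto_S_zero {E : Type*} [NormedAddCommGroup E] {x : ℤ → E}
    (hx : Summable fun n => ‖x n‖ ^ 2) {S : E → ℝ} (hS0 : S 0 = 0)
    (hScont : ContinuousAt S 0) {m : ℕ → ℤ} (hm : Function.Injective m) :
    Filter.Tendsto (fun N => S (x (m N))) Filter.atTop (nhds 0) := by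
  have h1 : Filter.Tendsto (fun n : ℤ => ‖x n‖ ^ 2) Filter.cofinite (nhds 0) :=
    hx.tendsto_cofinite_zero
  have h2 : Filter.Tendsto (fun N : ℕ => ‖x (m N)‖ ^ 2) Filter.atTop (nhds 0) := by
    rw [← Nat.cofinite_eq_atTop]
    exact h1.comp hm.tendsto_cofinite
  have h3 : Filter.Tendsto (fun N : ℕ => ‖x (m N)‖) Filter.atTop (nhds 0) := by
    have := (Real.continuous_sqrt.tendsto 0).comp h2
    simpa [Function.comp_def, Real.sqrt_sq (norm_nonneg _)] using this
  have h4 : Filter.Tendsto (fun N : ℕ => x (m N)) Filter.atTop (nhds 0) :=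
    tendsto_zero_iff_norm_tendsto_zero.mpr h3
  have h5 : Filter.Tendsto S (nhds 0) (nhds 0) := by
    simpa [ContinuousAt, hS0] using hScont
  exact h5.comp h4


theorem storage_between_available_and_required
    {U Xm Xp Y : Type*}
    [NormedAddCommGroup U] [InnerProductSpace ℂ U] [CompleteSpace U]
    [NormedAddCommGroup Xm] [InnerProductSpace ℂ Xm] [CompleteSpace Xm]
    [NormedAddCommGroup Xp] [InnerProductSpace ℂ Xp] [CompleteSpace Xp]
    [NormedAddCommGroup Y] [InnerProductSpace ℂ Y] [CompleteSpace Y]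
    -- dichotomous state operator `A = A₋ ⊕ A₊` on `X = X₋ × X₊`
    (Am : Xm →L[ℂ] Xm) (Ap : Xp →L[ℂ] Xp) (AmInv : Xm →L[ℂ] Xm)
    (hAmInv₁ : Am ∘L AmInv = 1) (hAmInv₂ : AmInv ∘L Am = 1)
    (hAp : spectralRadius ℂ Ap < 1) (hAm : spectralRadius ℂ AmInv < 1)
    (A : Xm × Xp →L[ℂ] Xm × Xp) (hA : A = Am.prodMap Ap)
    (B : U →L[ℂ] Xm × Xp) (C : Xm × Xp →L[ℂ] Y) (D : U →L[ℂ] Y)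
    -- the set of ℓ²-admissible system trajectories
    (Adm : Set ((ℤ → U) × (ℤ → Xm × Xp) × (ℤ → Y)))
    (hAdm : ∀ u x y, (u, x, y) ∈ Adm ↔
      Memℓp u 2 ∧ Memℓp x 2 ∧ Memℓp y 2 ∧
      ∀ n : ℤ, x (n + 1) = A (x n) + B (u n) ∧ y n = C (x n) + D (u n))
    -- every ℓ² input generates an ℓ²-admissible trajectory (dichotomy)
    (hexist : ∀ u : ℤ → U, Memℓp u 2 → ∃ x y, (u, x, y) ∈ Adm)
    -- `‖F_Σ‖_{∞,𝕋} ≤ 1`, i.e. the input-output map is a contraction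
    (hcontr : ∀ u x y, (u, x, y) ∈ Adm →
      (∑' n : ℤ, ‖y n‖ ^ 2) ≤ ∑' n : ℤ, ‖u n‖ ^ 2)
    -- ℓ²-exact controllability: `W_c` is surjective
    (hWc : ∀ x₀ : Xm × Xp, ∃ u x y, (u, x, y) ∈ Adm ∧ x 0 = x₀)
    -- `S̃` is a storage function
    (S : Xm × Xp → ℝ) (hS0 : S 0 = 0) (hScont : ContinuousAt S 0)
    (hSdiss : ∀ u x y, (u, x, y) ∈ Adm →
      ∀ n : ℤ, S (x (n + 1)) - S (x n) ≤ ‖u n‖ ^ 2 - ‖y n‖ ^ 2) :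
    ∀ x₀ : Xm × Xp,
      -- `S_a(x₀) ≤ S̃(x₀)`
      sSup {s : ℝ | ∃ u x y, (u, x, y) ∈ Adm ∧ x 0 = x₀ ∧
          s = ∑' n : ℕ, (‖y (n : ℤ)‖ ^ 2 - ‖u (n : ℤ)‖ ^ 2)} ≤ S x₀ ∧
      -- `S̃(x₀) ≤ S_r(x₀)`
      S x₀ ≤ sInf {s : ℝ | ∃ u x y, (u, x, y) ∈ Adm ∧ x 0 = x₀ ∧
          s = ∑' n : ℕ, (‖u (-(n : ℤ) - 1)‖ ^ 2 - ‖y (-(n : ℤ) - 1)‖ ^ 2)} := by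
  
  intro x₀
  obtain ⟨u₀, xx₀, y₀, hmem₀, hx₀⟩ := hWc x₀
  constructor
  · -- S_a ≤ S
    refine csSup_le ⟨∑' n : ℕ, (‖y₀ (n : ℤ)‖ ^ 2 - ‖u₀ (n : ℤ)‖ ^ 2), u₀, xx₀, y₀, hmem₀, hx₀, rfl⟩ ?_
    rintro s ⟨u, x, y, hmem, hx0, rfl⟩
    obtain ⟨hu, hx, hy, -⟩ := (hAdm u x y).mp hmem
    have hus := aux_l2_summable_sq hu
    have hys := aux_l2_summable_sq hy
    have hxs := aux_l2_summable_sq hx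
    have hf : Summable (fun k : ℕ => ‖y (k : ℤ)‖ ^ 2 - ‖u (k : ℤ)‖ ^ 2) :=
      (hys.comp_injective (Nat.cast_injective : Function.Injective (Nat.cast : ℕ → ℤ))).sub
        (hus.comp_injective (Nat.cast_injective : Function.Injective (Nat.cast : ℕ → ℤ)))
    have hsum := hf.hasSum.tendsto_sum_nat
    have hSx := aux_tendsto_S_zero hxs hS0 hScont ((Nat.cast_injective : Function.Injective (Nat.cast : ℕ → ℤ)))
    have key : ∀ N : ℕ, ∑ k ∈ Finset.range N, (‖y (k : ℤ)‖ ^ 2 - ‖u (k : ℤ)‖ ^ 2)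
        ≤ S x₀ - S (x (N : ℤ)) := by
      intro N
      have hb : ∀ k ∈ Finset.range N,
          S (x ((k : ℤ) + 1)) - S (x (k : ℤ)) ≤ ‖u (k : ℤ)‖ ^ 2 - ‖y (k : ℤ)‖ ^ 2 :=
        fun k _ => hSdiss u x y hmem k
      have hsum_le := Finset.sum_le_sum hb
      have tele := Finset.sum_range_sub (fun k : ℕ => S (x (k : ℤ))) N
      simp only [Nat.cast_add, Nat.cast_one, Nat.cast_zero, hx0] at tele
      simp only [Finset.sum_sub_distrib] at hsum_le tele ⊢
      linarith
    have hlim2 : Filter.Tendsto (fun N : ℕ => S x₀ - S (x (N : ℤ)))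
        Filter.atTop (nhds (S x₀ - 0)) := tendsto_const_nhds.sub hSx
    have := le_of_tendsto_of_tendsto' hsum hlim2 key
    simpa using this
  · -- S ≤ S_r
    refine le_csInf ⟨∑' n : ℕ, (‖u₀ (-(n : ℤ) - 1)‖ ^ 2 - ‖y₀ (-(n : ℤ) - 1)‖ ^ 2), u₀, xx₀, y₀, hmem₀, hx₀, rfl⟩ ?_
    rintro s ⟨u, x, y, hmem, hx0, rfl⟩
    obtain ⟨hu, hx, hy, -⟩ := (hAdm u x y).mp hmem
    have hus := aux_l2_summable_sq hu
    have hys := aux_l2_summable_sq hy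
    have hxs := aux_l2_summable_sq hx
    have hmneg : Function.Injective (fun k : ℕ => -(k : ℤ)) :=
      neg_injective.comp (Nat.cast_injective : Function.Injective (Nat.cast : ℕ → ℤ))
    have hmneg1 : Function.Injective (fun k : ℕ => -(k : ℤ) - 1) :=
      fun a b h => hmneg (by simpa [sub_left_inj] using h)
    have hg : Summable (fun k : ℕ => ‖u (-(k : ℤ) - 1)‖ ^ 2 - ‖y (-(k : ℤ) - 1)‖ ^ 2) :=
      (hus.comp_injective hmneg1).sub (hys.comp_injective hmneg1)
    have hsum := hg.hasSum.tendsto_sum_nat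
    have hSx := aux_tendsto_S_zero hxs hS0 hScont hmneg
    have key : ∀ N : ℕ, S x₀ - S (x (-(N : ℤ)))
        ≤ ∑ k ∈ Finset.range N, (‖u (-(k : ℤ) - 1)‖ ^ 2 - ‖y (-(k : ℤ) - 1)‖ ^ 2) := by
      intro N
      have hb : ∀ k ∈ Finset.range N,
          S (x (-(k : ℤ))) - S (x (-(k : ℤ) - 1))
            ≤ ‖u (-(k : ℤ) - 1)‖ ^ 2 - ‖y (-(k : ℤ) - 1)‖ ^ 2 := by
        intro k _
        have h := hSdiss u x y hmem (-(k : ℤ) - 1)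
        have e : -(k : ℤ) - 1 + 1 = -(k : ℤ) := by ring
        rwa [e] at h
      have hsum_le := Finset.sum_le_sum hb
      have tele := Finset.sum_range_sub' (fun k : ℕ => S (x (-(k : ℤ)))) N
      have e2 : ∀ k : ℕ, -((k : ℤ) + 1) = -(k : ℤ) - 1 := fun k => by ring
      simp only [Nat.cast_add, Nat.cast_one, Nat.cast_zero, neg_zero, hx0, e2] at tele
      simp only [Finset.sum_sub_distrib] at hsum_le tele ⊢
      linarith
    have hlim2 : Filter.Tendsto (fun N : ℕ => S x₀ - S (x (-(N : ℤ))))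
        Filter.atTop (nhds (S x₀ - 0)) := tendsto_const_nhds.sub hSx
    have := le_of_tendsto_of_tendsto' hlim2 hsum key
    simpa using this
end
end
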